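/- arXiv:2010.08494 — 6 statements merged into one kernel-verified Lean document; each statement's English description precedes it below -/
import Mathlib

section
/- For any square matrix A and vectors v, g, the function y(t) = v + t·φ(−tA)(g − Av) satisfies the initial value problem y'(t) = −A y(t) + g with y(0) = v, where φ(z) = (e^z − 1)/z (φ(0)=1) is applied to the matrix −tA. -/
/-!
With `x = -A` and `Φ(t) = t • φ(t • x) = ∑ t^(k+1)/(k+1)! • x^k`, termwise differentiation gives
`Φ'(t) = exp (t • x)`, and shifting the index gives `x * Φ(t) = exp (t • x) - 1`. So
`y(t) = v + Φ(t) w` with `w = g - A v` has `y'(t) = exp (t • x) w = w + x Φ(t) w = -A y(t) + g`.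
-/

open Matrix

/-- The matrix function `φ(M) = Σ_{k≥0} M^k/(k+1)!`. -/
noncomputable def phiMat {n : ℕ} (M : Matrix (Fin n) (Fin n) ℝ) : Matrix (Fin n) (Fin n) ℝ :=
  ∑' k : ℕ, (((k + 1).factorial : ℝ))⁻¹ • M ^ k

open NormedSpace
open scoped Nat

noncomputable def phi {𝔸 : Type*} [Ring 𝔸] [Module ℝ 𝔸] [TopologicalSpace 𝔸] (x : 𝔸) : 𝔸 :=
  ∑' k : ℕ, ((k + 1)! : ℝ)⁻¹ • x ^ k

lemma hasDerivAt_inv_factorial_succ_mul_pow_succ (k : ℕ) (s : ℝ) :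
    HasDerivAt (fun s : ℝ => ((k + 1)! : ℝ)⁻¹ * s ^ (k + 1)) ((k ! : ℝ)⁻¹ * s ^ k) s := by
  refine ((hasDerivAt_pow (k + 1) s).const_mul ((k + 1)! : ℝ)⁻¹).congr_deriv ?_
  rw [Nat.factorial_succ]
  push_cast
  field_simp

section Phi

variable {𝔸 : Type*} [NormedRing 𝔸] [NormedAlgebra ℝ 𝔸]

lemma smul_phi_smul_eq_tsum (t : ℝ) (x : 𝔸) :
    t • phi (t • x) = ∑' k : ℕ, (((k + 1)! : ℝ)⁻¹ * t ^ (k + 1)) • x ^ k := by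
  rw [phi, ← tsum_const_smul'']
  congr with k
  rw [smul_pow, smul_smul, smul_smul, pow_succ]
  ring_nf

variable [CompleteSpace 𝔸]

lemma summable_inv_factorial_succ_smul_pow (x : 𝔸) :
    Summable fun k : ℕ => ((k + 1)! : ℝ)⁻¹ • x ^ k := by
  refine .of_norm_bounded (norm_expSeries_summable' (𝕂 := ℝ) x) fun k => ?_
  rw [norm_smul, norm_smul]
  gcongr
  simp only [norm_inv, Real.norm_natCast]
  gcongr
  exact Nat.le_succ k

lemma mul_phi (x : 𝔸) : x * phi x = exp x - 1 := by
  rw [phi, ← (summable_inv_factorial_succ_smul_pow x).tsum_mul_left,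
    ← (exp_series_hasSum_exp' (𝕂 := ℝ) x).tsum_eq,
    (expSeries_summable' (𝕂 := ℝ) x).tsum_eq_zero_add]
  simp only [pow_zero, Nat.factorial_zero, Nat.cast_one, inv_one, one_smul, add_sub_cancel_left]
  congr with k
  rw [pow_succ', mul_smul_comm]

lemma mul_smul_phi_smul (t : ℝ) (x : 𝔸) : x * (t • phi (t • x)) = exp (t • x) - 1 := by
  rw [mul_smul_comm, ← smul_mul_assoc, mul_phi]

lemma hasDerivAt_smul_phi_smul (x : 𝔸) (t : ℝ) :
    HasDerivAt (fun s : ℝ => s • phi (s • x)) (exp (t • x)) t := by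
  set R := |t| + 1
  have hexp : exp (t • x) = ∑' k : ℕ, ((k ! : ℝ)⁻¹ * t ^ k) • x ^ k := by
    simp_rw [exp_eq_tsum ℝ, smul_pow, smul_smul]
  rw [funext fun s => smul_phi_smul_eq_tsum s x, hexp]
  -- on the ball of radius `R` the derivative series is dominated by the exponential series of `R • x`
  refine hasDerivAt_tsum_of_isPreconnected (norm_expSeries_summable' (𝕂 := ℝ) (R • x))
    Metric.isOpen_ball (convex_ball 0 R).isPreconnected
    (fun k s _ => (hasDerivAt_inv_factorial_succ_mul_pow_succ k s).smul_const (x ^ k))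
    (fun k s hs => ?_) (Metric.mem_ball_self (by positivity)) (by simp) (by simp [R])
  rw [smul_pow, smul_smul, norm_smul, norm_smul]
  rw [mem_ball_zero_iff] at hs
  gcongr
  simp only [norm_mul, norm_pow]
  gcongr
  simpa [R, abs_of_pos (by positivity : 0 < |t| + 1)] using hs.le

end Phi

-- Any Banach-algebra norm on matrices will do; `phiMat` is `phi` definitionally.
attribute [local instance] Matrix.linftyOpNormedRing Matrix.linftyOpNormedAlgebra

/-- `y(t) = v + t·φ(−tA)(g − Av)` solves `y' = −Ay + g`, `y(0) = v`. -/
theorem phi_solves_ivp {n : ℕ} (A : Matrix (Fin n) (Fin n) ℝ) (g v : Fin n → ℝ)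
    (y : ℝ → Fin n → ℝ)
    (hy : y = fun t => v + t • ((phiMat (-(t • A))).mulVec (g - A.mulVec v))) :
    y 0 = v ∧ ∀ t : ℝ, HasDerivAt y (-(A.mulVec (y t)) + g) t := by
  set w := g - A *ᵥ v with hw
  have hy' : y = fun t => v + (t • phi (t • -A)) *ᵥ w := by
    rw [hy]
    funext t
    rw [smul_neg, smul_mulVec]
    rfl
  refine ⟨by simp [hy], fun t => ?_⟩
  let applyTo : Matrix (Fin n) (Fin n) ℝ →L[ℝ] Fin n → ℝ :=
    LinearMap.toContinuousLinearMap ((mulVecBilin ℝ ℝ).flip w)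
  have hderiv :=
    (applyTo.hasFDerivAt.comp_hasDerivAt t (hasDerivAt_smul_phi_smul (-A) t)).const_add v
  have hkey : -A * (t • phi (t • -A)) = exp (t • -A) - 1 := mul_smul_phi_smul t (-A)
  rw [hy']
  refine hderiv.congr_deriv ?_
  calc exp (t • -A) *ᵥ w
      = w + (-A * (t • phi (t • -A))) *ᵥ w := by
        rw [hkey, sub_mulVec, one_mulVec]; abel
    _ = -(A *ᵥ (v + (t • phi (t • -A)) *ᵥ w)) + g := by
        rw [mulVec_add, ← mulVec_mulVec, neg_mulVec, hw]; abel
end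

section
/- If A ∈ ℝ^{n×n} satisfies x^T A x ≥ ω x^T x for all x with ω ≥ 0, then for all t ≥ 0 the matrix function φ(−tA) satisfies ‖φ(−tA)‖₂ ≤ φ(−tω), where φ(z) = (e^z − 1)/z for z ≠ 0 and φ(0) = 1. -/
open Matrix
open scoped Matrix.Norms.L2Operator

/-- The scalar function `φ(z) = (e^z − 1)/z`, `φ(0) = 1`. -/
noncomputable def phiR (z : ℝ) : ℝ := if z = 0 then 1 else (Real.exp z - 1) / z

/-!
Both sides are averages over `s ∈ [0, 1]`: termwise integration of the exponential series gives
`φ(M) = ∫₀¹ exp(sM) ds`, and likewise `φ(c) = ∫₀¹ e^{sc} ds`. So it suffices that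
`‖exp(-uA)‖₂ ≤ e^{-uω}` for `u ≥ 0`. Along `y(u) = exp(-uA) x` one has
`d/du ‖y‖² = -2 yᵀAy ≤ -2ω ‖y‖²`, and Grönwall's inequality gives `‖y(u)‖ ≤ e^{-uω} ‖x‖`.
-/

open MeasureTheory NormedSpace intervalIntegral
open scoped RealInnerProductSpace

theorem phiR_eq_integral (c : ℝ) : phiR c = ∫ s in (0:ℝ)..1, Real.exp (s * c) := by
  rcases eq_or_ne c 0 with rfl | hc
  · simp [phiR]
  · rw [phiR, if_neg hc, integral_comp_mul_right Real.exp hc, integral_exp]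
    simp [div_eq_inv_mul]

section PowerSeries

variable {𝔸 : Type*} [NormedRing 𝔸] [NormedAlgebra ℝ 𝔸] [CompleteSpace 𝔸]

theorem integral_pow_mul_inv_factorial_smul (a : 𝔸) (k : ℕ) :
    ∫ s in (0:ℝ)..1, (s ^ k * (k.factorial : ℝ)⁻¹) • a ^ k
      = ((k + 1).factorial : ℝ)⁻¹ • a ^ k := by
  rw [intervalIntegral.integral_smul_const, intervalIntegral.integral_mul_const, integral_pow,
    Nat.factorial_succ]
  push_cast
  field_simp
  simp

theorem hasSum_inv_factorial_succ_smul_pow (a : 𝔸) :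
    HasSum (fun k : ℕ => ((k + 1).factorial : ℝ)⁻¹ • a ^ k) (∫ s in (0:ℝ)..1, exp (s • a)) := by
  simp only [← integral_pow_mul_inv_factorial_smul]
  refine hasSum_integral_of_dominated_convergence (fun k _ => ‖((k.factorial : ℝ)⁻¹) • a ^ k‖)
    (fun k => by fun_prop) (fun k => ae_of_all _ fun s hs => ?_)
    (ae_of_all _ fun _ _ => norm_expSeries_summable' a) intervalIntegrable_const
    (ae_of_all _ fun s _ => ?_)
  · rw [Set.uIoc_of_le zero_le_one] at hs
    rw [mul_smul, norm_smul _ (_ • _), Real.norm_eq_abs, abs_pow, abs_of_pos hs.1]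
    exact mul_le_of_le_one_left (norm_nonneg _) (pow_le_one₀ hs.1.le hs.2)
  · simpa only [smul_pow, smul_smul, mul_comm] using exp_series_hasSum_exp' (𝕂 := ℝ) (s • a)

end PowerSeries

theorem phiMat_eq_integral {n : ℕ} (M : Matrix (Fin n) (Fin n) ℝ) :
    phiMat M = ∫ s in (0:ℝ)..1, exp (s • M) :=
  (hasSum_inv_factorial_succ_smul_pow M).tsum_eq

theorem le_mul_exp_of_hasDerivAt_le_mul {g g' : ℝ → ℝ} {K : ℝ} (hg : ∀ u, HasDerivAt g (g' u) u)
    (hK : ∀ u, g' u ≤ K * g u) {s : ℝ} (hs : 0 ≤ s) : g s ≤ g 0 * Real.exp (K * s) := by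
  have := le_gronwallBound_of_liminf_deriv_right_le (a := 0) (b := s) (δ := g 0) (ε := 0)
    (continuous_iff_continuousAt.2 fun u => (hg u).continuousAt).continuousOn
    (fun u _ _ hr => (hg u).hasDerivWithinAt.liminf_right_slope_le hr) le_rfl
    (fun u _ => by simpa using hK u) s ⟨hs, le_rfl⟩
  simpa [gronwallBound_ε0] using this

section InnerProductSpace

variable {H : Type*} [NormedAddCommGroup H] [InnerProductSpace ℝ H] [CompleteSpace H]

theorem norm_exp_neg_smul_apply_le (T : H →L[ℝ] H) {ω : ℝ}
    (hT : ∀ x, ω * ‖x‖ ^ 2 ≤ ⟪x, T x⟫) {s : ℝ} (hs : 0 ≤ s) (x : H) :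
    ‖exp (-(s • T)) x‖ ≤ Real.exp (-(s * ω)) * ‖x‖ := by
  set f : ℝ → H := fun u => exp (u • -T) x
  have hf : ∀ u, HasDerivAt f (-T (f u)) u := fun u =>
    (ContinuousLinearMap.apply ℝ H x).hasFDerivAt.comp_hasDerivAt u
      (hasDerivAt_exp_smul_const' (-T) u)
  have hdecay : ∀ u, 2 * ⟪f u, -T (f u)⟫ ≤ -2 * ω * ‖f u‖ ^ 2 := fun u => by
    rw [inner_neg_right]
    linarith [hT (f u)]
  have hsq := le_mul_exp_of_hasDerivAt_le_mul (fun u => (hf u).norm_sq) hdecay hs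
  have hf0 : f 0 = x := by simp [f]
  rw [hf0] at hsq
  rw [← smul_neg]
  refine (pow_le_pow_iff_left₀ (norm_nonneg _) (by positivity) two_ne_zero).1 ?_
  calc ‖f s‖ ^ 2 ≤ ‖x‖ ^ 2 * Real.exp (-2 * ω * s) := hsq
    _ = (Real.exp (-(s * ω)) * ‖x‖) ^ 2 := by
      rw [mul_pow, ← Real.exp_nat_mul]
      ring_nf

theorem norm_exp_neg_smul_le (T : H →L[ℝ] H) {ω : ℝ}
    (hT : ∀ x, ω * ‖x‖ ^ 2 ≤ ⟪x, T x⟫) {s : ℝ} (hs : 0 ≤ s) :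
    ‖exp (-(s • T))‖ ≤ Real.exp (-(s * ω)) :=
  ContinuousLinearMap.opNorm_le_bound _ (Real.exp_nonneg _) (norm_exp_neg_smul_apply_le T hT hs)

end InnerProductSpace

namespace Matrix

variable {m : Type*} [Fintype m] [DecidableEq m]

theorem l2_opNorm_exp (A : Matrix m m ℝ) : ‖exp A‖ = ‖exp (toEuclideanCLM (𝕜 := ℝ) A)‖ := by
  rw [← l2_opNorm_toEuclideanCLM, map_exp_of_mem_ball (𝕂 := ℝ) _
    (AddMonoidHomClass.continuous_of_bound _ 1 fun B => (one_mul ‖B‖).symm.le) A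
    ((expSeries_radius_eq_top ℝ (Matrix m m ℝ)).symm ▸ edist_lt_top _ _)]

theorem l2_opNorm_exp_neg_smul_le (A : Matrix m m ℝ) {ω : ℝ}
    (hA : ∀ x : m → ℝ, ω * (x ⬝ᵥ x) ≤ x ⬝ᵥ A *ᵥ x) {s : ℝ} (hs : 0 ≤ s) :
    ‖exp (-(s • A))‖ ≤ Real.exp (-(s * ω)) := by
  rw [l2_opNorm_exp, map_neg, map_smul]
  refine norm_exp_neg_smul_le _ (fun x => ?_) hs
  rw [inner_toEuclideanCLM, ← real_inner_self_eq_norm_sq, EuclideanSpace.inner_eq_star_dotProduct]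
  simpa using hA x

end Matrix

theorem phi_norm_bound_general {n : ℕ} (A : Matrix (Fin n) (Fin n) ℝ) (ω : ℝ)
    (hA : ∀ x : Fin n → ℝ, ω * (x ⬝ᵥ x) ≤ x ⬝ᵥ A.mulVec x) :
    ∀ t : ℝ, 0 ≤ t → ‖phiMat (-(t • A))‖ ≤ phiR (-(t * ω)) := by
  intro t ht
  have hexp : ∀ s ∈ Set.Ioc (0:ℝ) 1, ‖exp (s • -(t • A))‖ ≤ Real.exp (s * -(t * ω)) := by
    intro s hs
    rw [smul_neg, smul_smul, mul_neg, ← mul_assoc]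
    exact l2_opNorm_exp_neg_smul_le A hA (mul_nonneg hs.1.le ht)
  rw [phiMat_eq_integral, phiR_eq_integral]
  exact intervalIntegral.norm_integral_le_of_norm_le zero_le_one (ae_of_all _ hexp)
    (Continuous.intervalIntegrable (by fun_prop) _ _)

/-- If `xᵀAx ≥ ω xᵀx` for all `x`, with `ω ≥ 0`, then `‖φ(−tA)‖₂ ≤ φ(−tω)` for `t ≥ 0`. -/
theorem phi_norm_bound {n : ℕ} (A : Matrix (Fin n) (Fin n) ℝ) (ω : ℝ) (hω : 0 ≤ ω)
    (hA : ∀ x : Fin n → ℝ, ω * (x ⬝ᵥ x) ≤ x ⬝ᵥ A.mulVec x) :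
    ∀ t : ℝ, 0 ≤ t → ‖phiMat (-(t • A))‖ ≤ phiR (-(t * ω)) :=
  phi_norm_bound_general A ω hA
end

section
/- Let ε(t) = y(t) − y_k(t) where y solves y' = −Ay + g, y(0) = v, and y_k is differentiable with y_k(0) = v and residual r_k(t) = −A y_k(t) + g − y_k'(t). Then ε solves ε'(t) = −A ε(t) + r_k(t) with ε(0) = 0, and consequently, if x^T A x ≥ ω‖x‖² for all x with ω ≥ 0, then ‖ε(t)‖ ≤ t φ(−tω) · max_{s∈[0,t]} ‖r_k(s)‖ for t ≥ 0. -/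
/-!
Subtracting the two equations shows that `ε = y - y_k` solves `ε' = -Aε + r_k` with `ε(0) = 0`.
Coercivity of `A` makes the norm of such a solution satisfy the one-sided differential
inequality `D⁺‖ε‖ ≤ -ω‖ε‖ + ‖r_k‖` (at a zero of `ε` the right slope of `‖ε‖` is just `‖r_k‖`),
so Grönwall's inequality bounds `‖ε(t)‖` by `M (1 - e^{-ωt})/ω = t φ(-tω) M`,
where `M` is the maximum of `‖r_k‖` on `[0, t]`.
-/

open Matrix
open scoped RealInnerProductSpace

open Set Filter Topology

theorem gronwallBound_δ0 (K ε x : ℝ) : gronwallBound 0 K ε x = x * phiR (x * K) * ε := by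
  by_cases hK : K = 0
  · simp [hK, gronwallBound_K0, phiR, mul_comm]
  by_cases hx : x = 0
  · simp [hx, gronwallBound_x0]
  rw [gronwallBound_of_K_ne_0 hK, phiR, if_neg (mul_ne_zero hx hK)]
  field_simp
  ring

section Coercive

variable {E : Type*} [NormedAddCommGroup E] [InnerProductSpace ℝ E]

theorem HasDerivWithinAt.norm {f : ℝ → E} {f' : E} {s : Set ℝ} {x : ℝ}
    (hf : HasDerivWithinAt f f' s x) (h0 : f x ≠ 0) :
    HasDerivWithinAt (‖f ·‖) (⟪f x, f'⟫ / ‖f x‖) s x := by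
  have hsq : ‖f x‖ ^ 2 ≠ 0 := pow_ne_zero 2 (norm_ne_zero_iff.2 h0)
  convert hf.norm_sq.sqrt hsq using 1
  · simp only [Real.sqrt_sq (norm_nonneg _)]
  · rw [Real.sqrt_sq (norm_nonneg _)]
    field_simp

variable {T : E →ₗ[ℝ] E} {ω : ℝ}

theorem HasDerivWithinAt.liminf_right_slope_norm_le_of_coercive
    (hT : ∀ u, ω * ‖u‖ ^ 2 ≤ ⟪u, T u⟫) {f : ℝ → E} {v : E} {x ρ : ℝ}
    (hf : HasDerivWithinAt f (-(T (f x)) + v) (Ici x) x) (hρ : -ω * ‖f x‖ + ‖v‖ < ρ) :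
    ∃ᶠ z in 𝓝[>] x, (z - x)⁻¹ * (‖f z‖ - ‖f x‖) < ρ := by
  by_cases h0 : f x = 0
  · rw [h0, map_zero, neg_zero, zero_add] at hf
    rw [h0, norm_zero, mul_zero, zero_add] at hρ
    exact hf.liminf_right_slope_norm_le hρ
  have hpos : 0 < ‖f x‖ := norm_pos_iff.2 h0
  have hderiv : ⟪f x, -(T (f x)) + v⟫ / ‖f x‖ ≤ -ω * ‖f x‖ + ‖v‖ := by
    rw [div_le_iff₀ hpos, inner_add_right, inner_neg_right]
    nlinarith [hT (f x), real_inner_le_norm (f x) v]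
  exact (hf.norm h0).liminf_right_slope_le (hderiv.trans_lt hρ)

theorem norm_le_gronwallBound_of_coercive (hT : ∀ u, ω * ‖u‖ ^ 2 ≤ ⟪u, T u⟫)
    {f r : ℝ → E} {M a b : ℝ} (hf : ContinuousOn f (Icc a b))
    (hf' : ∀ x ∈ Ico a b, HasDerivWithinAt f (-(T (f x)) + r x) (Ici x) x)
    (hr : ∀ x ∈ Ico a b, ‖r x‖ ≤ M) :
    ∀ x ∈ Icc a b, ‖f x‖ ≤ gronwallBound ‖f a‖ (-ω) M (x - a) :=
  le_gronwallBound_of_liminf_deriv_right_le (f' := fun x ↦ -ω * ‖f x‖ + ‖r x‖)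
    (continuous_norm.comp_continuousOn hf)
    (fun x hx _ hρ ↦ (hf' x hx).liminf_right_slope_norm_le_of_coercive hT hρ) le_rfl
    (fun x hx ↦ by linarith [hr x hx])

end Coercive

theorem error_ode_and_bound_general {n : ℕ} (A : Matrix (Fin n) (Fin n) ℝ) (ω : ℝ)
    (hA : ∀ x : EuclideanSpace ℝ (Fin n),
      ω * ‖x‖ ^ 2 ≤ ⟪x, Matrix.toEuclideanCLM (𝕜 := ℝ) A x⟫)
    (g v : EuclideanSpace ℝ (Fin n))
    (y yk : ℝ → EuclideanSpace ℝ (Fin n)) (yk' : ℝ → EuclideanSpace ℝ (Fin n))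
    (hy : ∀ t, HasDerivAt y (-(Matrix.toEuclideanCLM (𝕜 := ℝ) A (y t)) + g) t)
    (hy0 : y 0 = v)
    (hyk : ∀ t, HasDerivAt yk (yk' t) t) (hyk0 : yk 0 = v)
    (hyk'c : Continuous yk')
    (r : ℝ → EuclideanSpace ℝ (Fin n))
    (hr : r = fun t => -(Matrix.toEuclideanCLM (𝕜 := ℝ) A (yk t)) + g - yk' t)
    (ε : ℝ → EuclideanSpace ℝ (Fin n)) (hε : ε = fun t => y t - yk t) :
    (∀ t, HasDerivAt ε (-(Matrix.toEuclideanCLM (𝕜 := ℝ) A (ε t)) + r t) t) ∧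
    ε 0 = 0 ∧
    ∀ t : ℝ, 0 ≤ t →
      ‖ε t‖ ≤ t * phiR (-(t * ω)) * sSup ((fun s => ‖r s‖) '' Set.Icc 0 t) := by
  set T := Matrix.toEuclideanCLM (𝕜 := ℝ) A
  have hε' : ∀ t, HasDerivAt ε (-(T (ε t)) + r t) t := by
    intro t
    subst hε hr
    refine ((hy t).sub (hyk t)).congr_deriv ?_
    simp only [map_sub]
    abel
  have hε0 : ε 0 = 0 := by simp [hε, hy0, hyk0]
  refine ⟨hε', hε0, fun t ht ↦ ?_⟩
  have hrc : Continuous r := by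
    have hykc : Continuous yk := continuous_iff_continuousAt.2 fun s ↦ (hyk s).continuousAt
    rw [hr]
    exact ((T.continuous.comp hykc).neg.add continuous_const).sub hyk'c
  have hbdd : BddAbove ((fun s ↦ ‖r s‖) '' Icc 0 t) :=
    (isCompact_Icc.image (continuous_norm.comp hrc)).bddAbove
  have hbound := norm_le_gronwallBound_of_coercive (T := T.toLinearMap) hA
    (continuous_iff_continuousAt.2 fun s ↦ (hε' s).continuousAt).continuousOn
    (fun s _ ↦ (hε' s).hasDerivWithinAt)
    (fun s hs ↦ le_csSup hbdd ⟨s, Ico_subset_Icc_self hs, rfl⟩) t ⟨ht, le_rfl⟩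
  rwa [hε0, norm_zero, sub_zero, gronwallBound_δ0, mul_neg] at hbound

/-- The error `ε = y − y_k` satisfies `ε' = −Aε + r_k`, `ε(0) = 0`, and hence
`‖ε(t)‖ ≤ t φ(−tω) max_{s∈[0,t]} ‖r_k(s)‖`. -/
theorem error_ode_and_bound {n : ℕ} (A : Matrix (Fin n) (Fin n) ℝ) (ω : ℝ) (hω : 0 ≤ ω)
    (hA : ∀ x : EuclideanSpace ℝ (Fin n),
      ω * ‖x‖ ^ 2 ≤ ⟪x, Matrix.toEuclideanCLM (𝕜 := ℝ) A x⟫)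
    (g v : EuclideanSpace ℝ (Fin n))
    (y yk : ℝ → EuclideanSpace ℝ (Fin n)) (yk' : ℝ → EuclideanSpace ℝ (Fin n))
    (hy : ∀ t, HasDerivAt y (-(Matrix.toEuclideanCLM (𝕜 := ℝ) A (y t)) + g) t)
    (hy0 : y 0 = v)
    (hyk : ∀ t, HasDerivAt yk (yk' t) t) (hyk0 : yk 0 = v)
    (hyk'c : Continuous yk')
    (r : ℝ → EuclideanSpace ℝ (Fin n))
    (hr : r = fun t => -(Matrix.toEuclideanCLM (𝕜 := ℝ) A (yk t)) + g - yk' t)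
    (ε : ℝ → EuclideanSpace ℝ (Fin n)) (hε : ε = fun t => y t - yk t) :
    (∀ t, HasDerivAt ε (-(Matrix.toEuclideanCLM (𝕜 := ℝ) A (ε t)) + r t) t) ∧
    ε 0 = 0 ∧
    ∀ t : ℝ, 0 ≤ t →
      ‖ε t‖ ≤ t * phiR (-(t * ω)) * sSup ((fun s => ‖r s‖) '' Set.Icc 0 t) :=
  error_ode_and_bound_general A ω hA g v y yk yk' hy hy0 hyk hyk0 hyk'c r hr ε hε
end

section
/- For any real c > 0 and t ≥ 0, the function g(x) = (1 − e^{−ct} e^{−ctx})/(c(x+1)) on [−1,1] has Chebyshev coefficients satisfying a_m[g] = (4/c)(−1)^m Σ_{l=0}^{∞} (l+1) e^{−ct} I_{m+l+1}(ct), where I_ν is the modified Bessel function of the first kind and a_m[h] denotes the m-th Chebyshev coefficient of h. -/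
open Real

/-- Modified Bessel function of the first kind of integer order:
`I_ν(w) = (1/π) ∫_0^π e^{w cos θ} cos(ν θ) dθ`. -/
noncomputable def besselI (ν : ℕ) (w : ℝ) : ℝ :=
  (1 / Real.pi) * ∫ θ in (0:ℝ)..Real.pi, Real.exp (w * Real.cos θ) * Real.cos (ν * θ)

/-- The `m`-th Chebyshev coefficient `a_m[h] = (2/π)∫_{−1}^1 h(x) T_m(x)/√(1−x²) dx`. -/
noncomputable def chebCoeff (h : ℝ → ℝ) (m : ℕ) : ℝ :=
  (2 / Real.pi) *
    ∫ x in (-1:ℝ)..1, h x * (Polynomial.Chebyshev.T ℝ m).eval x / Real.sqrt (1 - x ^ 2)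

/-!
Substituting `x = -cos θ` turns `a_m[g]` into
`(-1)^m (2/(cπ)) ∫_0^π (1 - e^{-A(1 - cos θ)})/(1 - cos θ) cos mθ dθ` with `A = ct`.
Writing the quotient as `∫_0^A e^{-u(1 - cos θ)} du` and swapping the integrals gives
`(2/c)(-1)^m ∫_0^A e^{-u} I_m(u) du`. Since `I_n' = (I_{n-1} + I_{n+1})/2`, the derivative of
`E_n(u) = e^{-u} I_n(u)` is half the second difference `E_{n-1} - 2E_n + E_{n+1}`; summing by
parts, `Σ_{l<N} (l+1) E_{m+l+1}` is a primitive of `E_m/2` up to boundary terms in `E_{m+N}`,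
`E_{m+N+1}`, which vanish as `N → ∞` because `|I_n(u)| ≤ |u|^n e^{|u|}/n!`.
-/

open intervalIntegral Filter Topology Finset
open scoped Nat

lemma chebCoeff_eq_integral_cos (h : ℝ → ℝ) (m : ℕ) :
    chebCoeff h m = 2 / π * ∫ θ in 0..π, h (cos θ) * cos (m * θ) := by
  rw [chebCoeff]
  congr 1
  simp_rw [div_eq_mul_inv _ (√_), ← sqrt_inv]
  rw [← Polynomial.Chebyshev.integral_measureT (fun x => h x * _),
    Polynomial.Chebyshev.integral_measureT_eq_integral_cos]
  simp [Polynomial.Chebyshev.T_real_cos]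

lemma integral_comp_cos_mul_cos_eq_neg_one_pow_mul (f : ℝ → ℝ) (m : ℕ) :
    ∫ θ in 0..π, f (cos θ) * cos (m * θ) =
      (-1) ^ m * ∫ θ in 0..π, f (-cos θ) * cos (m * θ) := by
  have h := integral_comp_sub_left (fun θ => f (cos θ) * cos (m * θ)) (a := 0) (b := π) π
  rw [sub_self, sub_zero] at h
  rw [← h, ← integral_const_mul]
  refine integral_congr fun θ _ => ?_
  simp only [cos_pi_sub, mul_sub, cos_nat_mul_pi_sub]
  ring

lemma mul_cos_le_abs (x θ : ℝ) : x * cos θ ≤ |x| :=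
  (le_abs_self _).trans <| by
    rw [abs_mul]; exact mul_le_of_le_one_right (abs_nonneg x) (abs_cos_le_one θ)

lemma abs_besselI_le (n : ℕ) (w : ℝ) : |besselI n w| ≤ exp |w| := by
  have hbound : ∀ θ ∈ Set.uIoc 0 π, ‖exp (w * cos θ) * cos (n * θ)‖ ≤ exp |w| := by
    intro θ _
    rw [norm_mul, norm_of_nonneg (exp_pos _).le]
    exact (mul_le_of_le_one_right (exp_pos _).le (abs_cos_le_one _)).trans
      (exp_le_exp.2 (mul_cos_le_abs w θ))
  have := norm_integral_le_of_norm_le_const hbound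
  rw [sub_zero, abs_of_pos pi_pos] at this
  rw [besselI, abs_mul, abs_of_pos (by positivity)]
  calc 1 / π * |∫ θ in 0..π, exp (w * cos θ) * cos (n * θ)| ≤ 1 / π * (exp |w| * π) := by
        gcongr; exact this
    _ = exp |w| := by field_simp

lemma besselI_add_besselI (n : ℕ) (w : ℝ) :
    besselI n w + besselI (n + 2) w =
      2 / π * ∫ θ in 0..π, exp (w * cos θ) * (cos θ * cos ((n + 1) * θ)) := by
  have h (θ : ℝ) : exp (w * cos θ) * (cos θ * cos ((n + 1) * θ)) =
      (exp (w * cos θ) * cos (n * θ) + exp (w * cos θ) * cos ((n + 2 : ℕ) * θ)) / 2 := by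
    push_cast
    rw [show ((n : ℝ) + 2) * θ = (n + 1) * θ + θ by ring,
      show (n : ℝ) * θ = (n + 1) * θ - θ by ring, cos_add, cos_sub]
    ring
  simp_rw [h, integral_div]
  rw [integral_add, besselI, besselI]
  · ring
  all_goals exact Continuous.intervalIntegrable (by fun_prop) _ _

lemma besselI_sub_besselI (n : ℕ) (w : ℝ) :
    besselI n w - besselI (n + 2) w =
      2 / π * ∫ θ in 0..π, exp (w * cos θ) * (sin θ * sin ((n + 1) * θ)) := by
  have h (θ : ℝ) : exp (w * cos θ) * (sin θ * sin ((n + 1) * θ)) =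
      (exp (w * cos θ) * cos (n * θ) - exp (w * cos θ) * cos ((n + 2 : ℕ) * θ)) / 2 := by
    push_cast
    rw [show ((n : ℝ) + 2) * θ = (n + 1) * θ + θ by ring,
      show (n : ℝ) * θ = (n + 1) * θ - θ by ring, cos_add, cos_sub]
    ring
  simp_rw [h, integral_div]
  rw [integral_sub, besselI, besselI]
  · ring
  all_goals exact Continuous.intervalIntegrable (by fun_prop) _ _

lemma two_mul_add_one_mul_besselI_add_one (n : ℕ) (w : ℝ) :
    2 * (n + 1) * besselI (n + 1) w = w * (besselI n w - besselI (n + 2) w) := by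
  have hparts := integral_mul_deriv_eq_deriv_mul (a := 0) (b := π)
    (u := fun θ => exp (w * cos θ)) (u' := fun θ => exp (w * cos θ) * (w * -sin θ))
    (v := fun θ => sin ((n + 1) * θ)) (v' := fun θ => cos ((n + 1) * θ) * (n + 1))
    (fun θ _ => ((hasDerivAt_cos θ).const_mul w).exp)
    (fun θ _ => by simpa using ((hasDerivAt_id θ).const_mul ((n : ℝ) + 1)).sin)
    (Continuous.intervalIntegrable (by fun_prop) _ _)
    (Continuous.intervalIntegrable (by fun_prop) _ _)
  have hsin : sin ((n + 1) * π) = 0 := by exact_mod_cast sin_nat_mul_pi (n + 1)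
  simp only [hsin, mul_zero, sin_zero, sub_zero, zero_sub, ← mul_assoc, integral_mul_const]
    at hparts
  have key : (∫ θ in 0..π, exp (w * cos θ) * cos ((n + 1) * θ)) * (n + 1) =
      w * ∫ θ in 0..π, exp (w * cos θ) * (sin θ * sin ((n + 1) * θ)) := by
    rw [hparts, ← integral_neg, ← integral_const_mul]
    exact integral_congr fun θ _ => by ring
  rw [besselI_sub_besselI, besselI]
  push_cast
  linear_combination 2 / π * key

lemma abs_besselI_mul_descFactorial_le (j n : ℕ) (w : ℝ) :
    |besselI (n + j) w| * (n + j).descFactorial j ≤ |w| ^ j * exp |w| := by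
  induction j generalizing n with
  | zero => simpa using abs_besselI_le n w
  | succ j ih =>
    set D : ℝ := ((n + j).descFactorial j : ℝ)
    have hD : D ≤ (n + 2 + j).descFactorial j := by
      unfold D; exact_mod_cast Nat.descFactorial_le j (show n + j ≤ n + 2 + j by omega)
    have h₁ := ih n
    have h₂ := (mul_le_mul_of_nonneg_left hD (abs_nonneg _)).trans (ih (n + 2))
    rw [show n + 2 + j = n + j + 2 by ring] at h₂
    have hrec := congrArg (|·|) (two_mul_add_one_mul_besselI_add_one (n + j) w)
    simp only [abs_mul, abs_two,
      abs_of_nonneg (by positivity : (0 : ℝ) ≤ ((n + j : ℕ) : ℝ) + 1)] at hrec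
    rw [show n + (j + 1) = n + j + 1 by ring, Nat.succ_descFactorial_succ, Nat.cast_mul]
    calc |besselI (n + j + 1) w| * (((n + j + 1 : ℕ) : ℝ) * D)
        = |w| * (|besselI (n + j) w - besselI (n + j + 2) w| * D) / 2 := by
          push_cast at hrec ⊢; linear_combination D / 2 * hrec
      _ ≤ |w| * (|besselI (n + j) w| * D + |besselI (n + j + 2) w| * D) / 2 := by
          gcongr; rw [← add_mul]; gcongr; exact abs_sub _ _
      _ ≤ |w| * (|w| ^ j * exp |w| + |w| ^ j * exp |w|) / 2 := by gcongr
      _ = |w| ^ (j + 1) * exp |w| := by ring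

lemma abs_besselI_le_pow_div_factorial (n : ℕ) (w : ℝ) :
    |besselI n w| ≤ |w| ^ n * exp |w| / n ! := by
  rw [le_div_iff₀ (by positivity)]
  simpa [Nat.descFactorial_self] using abs_besselI_mul_descFactorial_le n 0 w

lemma hasDerivAt_besselI (n : ℕ) (w : ℝ) :
    HasDerivAt (besselI n)
      (1 / π * ∫ θ in 0..π, exp (w * cos θ) * (cos θ * cos (n * θ))) w := by
  refine (hasDerivAt_integral_of_dominated_loc_of_deriv_le (μ := MeasureTheory.volume)
    (F := fun x θ => exp (x * cos θ) * cos (n * θ))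
    (F' := fun x θ => exp (x * cos θ) * (cos θ * cos (n * θ)))
    (bound := fun _ => exp (|w| + 1)) (Metric.ball_mem_nhds w one_pos)
    (Eventually.of_forall fun x => (by fun_prop : Continuous _).aestronglyMeasurable)
    (Continuous.intervalIntegrable (by fun_prop) _ _)
    ((by fun_prop : Continuous _).aestronglyMeasurable)
    (Eventually.of_forall fun θ _ x hx => ?_) intervalIntegrable_const
    (Eventually.of_forall fun θ _ x _ => ?_)).2.const_mul _
  · have hx : |x| ≤ |w| + 1 := by
      have := abs_sub_abs_le_abs_sub x w
      rw [Metric.mem_ball, dist_eq] at hx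
      linarith
    rw [norm_mul, norm_of_nonneg (exp_pos _).le, norm_mul]
    calc exp (x * cos θ) * (‖cos θ‖ * ‖cos (n * θ)‖) ≤ exp (x * cos θ) * (1 * 1) := by
          gcongr <;> exact abs_cos_le_one _
      _ ≤ exp (|w| + 1) := by
          rw [mul_one, mul_one]; exact exp_le_exp.2 ((mul_cos_le_abs x θ).trans hx)
  · exact (((hasDerivAt_id x).mul_const (cos θ)).exp.mul_const (cos (n * θ))).congr_deriv
      (by simp only [id]; ring)

lemma hasDerivAt_besselI_add_one (n : ℕ) (w : ℝ) :
    HasDerivAt (besselI (n + 1)) ((besselI n w + besselI (n + 2) w) / 2) w := by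
  convert hasDerivAt_besselI (n + 1) w using 1
  rw [besselI_add_besselI]
  push_cast
  ring

lemma continuous_besselI (n : ℕ) : Continuous (besselI n) :=
  continuous_iff_continuousAt.2 fun w => (hasDerivAt_besselI n w).continuousAt

lemma besselI_add_one_zero (n : ℕ) : besselI (n + 1) 0 = 0 := by
  simpa [(by positivity : (n : ℝ) + 1 ≠ 0)] using two_mul_add_one_mul_besselI_add_one n 0

noncomputable def scaledBesselI (n : ℕ) (y : ℝ) : ℝ := exp (-y) * besselI n y

lemma continuous_scaledBesselI (n : ℕ) : Continuous (scaledBesselI n) :=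
  (continuous_exp.comp continuous_neg).mul (continuous_besselI n)

lemma natCast_mul_abs_scaledBesselI_le {R u : ℝ} (hu : |u| ≤ R) {k n : ℕ} (hk : k ≤ n + 1) :
    k * |scaledBesselI n u| ≤ exp (2 * R) * ((2 * R) ^ n / n !) := by
  have h2 : (k : ℝ) ≤ 2 ^ n := by exact_mod_cast hk.trans Nat.lt_two_pow_self
  have hexp : exp (-u) ≤ exp R := exp_le_exp.2 (by linarith [neg_abs_le u])
  have hR : 0 ≤ R ^ n := pow_nonneg ((abs_nonneg u).trans hu) n
  rw [scaledBesselI, abs_mul, abs_of_pos (exp_pos _)]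
  calc k * (exp (-u) * |besselI n u|) ≤ 2 ^ n * (exp R * (|u| ^ n * exp |u| / n !)) := by
        gcongr; exact abs_besselI_le_pow_div_factorial n u
    _ ≤ 2 ^ n * (exp R * (R ^ n * exp R / n !)) := by gcongr
    _ = exp (2 * R) * ((2 * R) ^ n / n !) := by rw [two_mul R, exp_add]; ring

lemma scaledBesselI_add_one_zero (n : ℕ) : scaledBesselI (n + 1) 0 = 0 := by
  rw [scaledBesselI, besselI_add_one_zero, mul_zero]

lemma hasDerivAt_scaledBesselI_add_one (n : ℕ) (y : ℝ) :
    HasDerivAt (scaledBesselI (n + 1)) ((scaledBesselI n y - 2 * scaledBesselI (n + 1) y +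
      scaledBesselI (n + 2) y) / 2) y :=
  ((hasDerivAt_neg y).exp.mul (hasDerivAt_besselI_add_one n y)).congr_deriv
    (by simp only [scaledBesselI]; ring)

lemma hasDerivAt_sum_range_mul_scaledBesselI (m N : ℕ) (y : ℝ) :
    HasDerivAt (fun y => ∑ l ∈ range N, ((l : ℝ) + 1) * scaledBesselI (m + l + 1) y)
      ((scaledBesselI m y - ((N + 1) * scaledBesselI (m + N) y -
        N * scaledBesselI (m + N + 1) y)) / 2) y := by
  induction N with
  | zero => simpa using hasDerivAt_const y (0 : ℝ)
  | succ N ih =>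
    simp only [sum_range_succ, show m + (N + 1) = m + N + 1 by ring]
    refine (ih.add ((hasDerivAt_scaledBesselI_add_one (m + N) y).const_mul ((N : ℝ) + 1)))
      |>.congr_deriv ?_
    rw [show m + N + 2 = m + N + 1 + 1 by ring]
    push_cast
    ring

lemma sum_range_mul_scaledBesselI_eq (m N : ℕ) (A : ℝ) :
    ∑ l ∈ range N, ((l : ℝ) + 1) * scaledBesselI (m + l + 1) A =
      ((∫ u in 0..A, scaledBesselI m u) -
        ∫ u in 0..A, ((N + 1) * scaledBesselI (m + N) u - N * scaledBesselI (m + N + 1) u)) /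
          2 := by
  have hcont (n : ℕ) := continuous_scaledBesselI n
  have hFTC := integral_eq_sub_of_hasDerivAt (a := 0) (b := A)
    (fun u _ => hasDerivAt_sum_range_mul_scaledBesselI m N u)
    (Continuous.intervalIntegrable (by fun_prop) _ _)
  simp only [scaledBesselI_add_one_zero, mul_zero, sum_const_zero, sub_zero] at hFTC
  rw [← hFTC, integral_div, integral_sub] <;>
    exact Continuous.intervalIntegrable (by fun_prop) _ _

lemma integral_scaledBesselI (m : ℕ) (A : ℝ) :
    ∫ u in 0..A, scaledBesselI m u =
      2 * ∑' l : ℕ, ((l : ℝ) + 1) * scaledBesselI (m + l + 1) A := by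
  set β : ℕ → ℝ := fun n => exp (2 * |A|) * ((2 * |A|) ^ n / n !)
  have hβ : Summable β := (summable_pow_div_factorial _).mul_left _
  have hβ_lim (k : ℕ) : Tendsto (fun N => β (m + N + k)) atTop (𝓝 0) :=
    hβ.tendsto_atTop_zero.comp <| tendsto_atTop_atTop.2 fun b => ⟨b, fun N hN => by omega⟩
  have hbound {u : ℝ} (hu : u ∈ Set.uIcc 0 A) {k n : ℕ} (hk : k ≤ n + 1) :
      k * |scaledBesselI n u| ≤ β n :=
    natCast_mul_abs_scaledBesselI_le (by simpa using Set.abs_sub_left_of_mem_uIcc hu) hk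
  have hsum : Summable fun l : ℕ => ((l : ℝ) + 1) * scaledBesselI (m + l + 1) A := by
    refine Summable.of_norm_bounded ((summable_nat_add_iff (m + 1)).2 hβ) fun l => ?_
    rw [norm_mul, norm_eq_abs, norm_eq_abs, abs_of_nonneg (by positivity),
      show l + (m + 1) = m + l + 1 by ring]
    exact_mod_cast hbound Set.right_mem_uIcc (k := l + 1) (by omega)
  have hremainder : Tendsto (fun N : ℕ => ∫ u in 0..A,
      ((N + 1) * scaledBesselI (m + N) u - N * scaledBesselI (m + N + 1) u)) atTop (𝓝 0) := by
    have hlim := ((hβ_lim 0).add (hβ_lim 1)).mul_const |A|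
    rw [zero_add, zero_mul] at hlim
    refine squeeze_zero_norm (fun N => ?_) hlim
    refine (norm_integral_le_of_norm_le_const fun u hu => ?_).trans_eq (by rw [sub_zero])
    replace hu := Set.uIoc_subset_uIcc hu
    rw [norm_eq_abs]
    refine (abs_sub _ _).trans (add_le_add ?_ ?_) <;> rw [abs_mul]
    · rw [abs_of_nonneg (by positivity)]
      exact_mod_cast hbound hu (k := N + 1) (by omega)
    · rw [Nat.abs_cast]
      exact hbound hu (by omega)
  have hlim := hsum.hasSum.tendsto_sum_nat.congr (sum_range_mul_scaledBesselI_eq m · A)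
  have hlim' := (tendsto_const_nhds (x := ∫ u in 0..A, scaledBesselI m u)).sub hremainder
  linarith [tendsto_nhds_unique hlim (hlim'.div_const 2)]

lemma integral_exp_neg_mul {b : ℝ} (hb : b ≠ 0) (A : ℝ) :
    ∫ u in 0..A, exp (-(u * b)) = (1 - exp (-(A * b))) / b := by
  simp only [integral_comp_mul_right (fun x => exp (-x)) hb, zero_mul, integral_comp_neg,
    neg_zero, integral_exp, exp_zero, smul_eq_mul]
  rw [div_eq_inv_mul]

lemma integral_one_sub_exp_div_mul_cos (m : ℕ) (A : ℝ) :
    ∫ θ in 0..π, (1 - exp (-(A * (1 - cos θ)))) / (1 - cos θ) * cos (m * θ) =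
      π * ∫ u in 0..A, scaledBesselI m u := by
  -- `1 - cos θ` vanishes only at `θ = 0`, which `Set.uIoc 0 π = (0, π]` excludes.
  have hquot : ∀ᵐ θ, θ ∈ Set.uIoc 0 π →
      (1 - exp (-(A * (1 - cos θ)))) / (1 - cos θ) * cos (m * θ) =
        ∫ u in 0..A, exp (-(u * (1 - cos θ))) * cos (m * θ) := by
    refine Eventually.of_forall fun θ hθ => ?_
    rw [Set.uIoc_of_le pi_pos.le] at hθ
    have hcos : cos θ < 1 := by simpa using cos_lt_cos_of_nonneg_of_le_pi le_rfl hθ.2 hθ.1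
    have hb : 1 - cos θ ≠ 0 := sub_ne_zero.2 hcos.ne'
    rw [integral_mul_const, integral_exp_neg_mul hb]
  have hinner (u : ℝ) : ∫ θ in 0..π, exp (-(u * (1 - cos θ))) * cos (m * θ) =
      π * scaledBesselI m u := by
    simp_rw [show ∀ θ, -(u * (1 - cos θ)) = -u + u * cos θ by intro; ring, exp_add, mul_assoc,
      integral_const_mul, scaledBesselI, besselI]
    field_simp
  rw [integral_congr_ae hquot, MeasureTheory.intervalIntegral_intervalIntegral_swap,
    ← integral_const_mul]
  · exact integral_congr fun u _ => hinner u
  · have hcont : Continuous fun p : ℝ × ℝ => exp (-(p.2 * (1 - cos p.1))) * cos (m * p.1) :=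
      by fun_prop
    exact (hcont.continuousOn.integrableOn_compact (isCompact_uIcc.prod isCompact_uIcc)).mono_set
      (Set.prod_mono Set.uIoc_subset_uIcc Set.uIoc_subset_uIcc)

theorem chebCoeff_of_g_general (c t : ℝ) (m : ℕ) :
    chebCoeff (fun x => (1 - Real.exp (-(c * t)) * Real.exp (-(c * t * x))) / (c * (x + 1))) m =
      (4 / c) * (-1) ^ m *
        ∑' l : ℕ, ((l : ℝ) + 1) * Real.exp (-(c * t)) * besselI (m + l + 1) (c * t) := by
  set g : ℝ → ℝ := fun x => (1 - exp (-(c * t)) * exp (-(c * t * x))) / (c * (x + 1))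
  have hg (θ : ℝ) : g (-cos θ) * cos (m * θ) =
      c⁻¹ * ((1 - exp (-(c * t * (1 - cos θ)))) / (1 - cos θ) * cos (m * θ)) := by
    simp only [g]
    rw [← exp_add, show -(c * t) + -(c * t * -cos θ) = -(c * t * (1 - cos θ)) by ring,
      show c * (-cos θ + 1) = c * (1 - cos θ) by ring, div_eq_mul_inv, div_eq_mul_inv, mul_inv]
    ring
  rw [chebCoeff_eq_integral_cos, integral_comp_cos_mul_cos_eq_neg_one_pow_mul,
    integral_congr fun θ _ => hg θ, integral_const_mul, integral_one_sub_exp_div_mul_cos,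
    integral_scaledBesselI]
  simp_rw [scaledBesselI, ← mul_assoc]
  set S := ∑' l : ℕ, ((l : ℝ) + 1) * exp (-(c * t)) * besselI (m + l + 1) (c * t)
  field_simp
  ring

/-- Chebyshev coefficients of `g(x) = (1 − e^{−ct} e^{−ctx})/(c(x+1))`:
`a_m[g] = (4/c)(−1)^m Σ_{l≥0} (l+1) e^{−ct} I_{m+l+1}(ct)`. -/
theorem chebCoeff_of_g (c t : ℝ) (hc : 0 < c) (ht : 0 ≤ t) (m : ℕ) :
    chebCoeff (fun x => (1 - Real.exp (-(c * t)) * Real.exp (-(c * t * x))) / (c * (x + 1))) m =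
      (4 / c) * (-1) ^ m *
        ∑' l : ℕ, ((l : ℝ) + 1) * Real.exp (-(c * t)) * besselI (m + l + 1) (c * t) :=
  chebCoeff_of_g_general c t m
end

section
/- For w > 0 and integer ν ≥ 0, the modified Bessel functions satisfy the ratio bound I_{ν+1}(w) < I_ν(w)/(1 + ν/w). -/
/-!
Expanding `exp (w cos θ)` in powers of `w cos θ` and integrating termwise, the moments
`∫₀^π cosⁿ θ cos (νθ) dθ = π (n.choose k) / 2ⁿ` for `n = ν + 2k` (and `0` otherwise), obtained from
the product-to-sum recursion, give the series `I_ν(w) = ∑ₖ (w/2)^(ν+2k) / (k! (k+ν)!)`.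

Let `a_k` and `b_k` be the terms of this series for `I_ν` and `I_{ν+1}`. Then
`w a_k = 2 (k+ν+1) b_k`, so `w I_ν - ν I_{ν+1} = ∑ c_k` with `c_k = (2k+ν+2) b_k`, and AM-GM in `w`
gives `2 w b_k ≤ c_k + c_{k+1}`. Summing, `2 w I_{ν+1} ≤ 2 ∑ c_k - c_0 < 2 (w I_ν - ν I_{ν+1})`.
-/

open MeasureTheory Real
open scoped Nat

noncomputable def cosMoment (n ν : ℕ) : ℝ :=
  ∫ θ in 0..π, cos θ ^ n * cos (ν * θ)

theorem intervalIntegrable_cos_pow_mul_cos (n ν : ℕ) :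
    IntervalIntegrable (fun θ ↦ cos θ ^ n * cos (ν * θ)) volume 0 π :=
  (by fun_prop : Continuous _).intervalIntegrable _ _

theorem cosMoment_zero_zero : cosMoment 0 0 = π := by
  simp [cosMoment]

theorem cosMoment_zero_succ (ν : ℕ) : cosMoment 0 (ν + 1) = 0 := by
  have hν : (ν + 1 : ℝ) ≠ 0 := by positivity
  simp only [cosMoment, pow_zero, one_mul, Nat.cast_succ]
  rw [intervalIntegral.integral_comp_mul_left cos hν, integral_cos, mul_zero, sin_zero,
    ← Nat.cast_succ, sin_nat_mul_pi, sub_zero, smul_zero]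

theorem cosMoment_succ_zero (n : ℕ) : cosMoment (n + 1) 0 = cosMoment n 1 := by
  simp [cosMoment, pow_succ]

theorem cosMoment_succ_succ (n ν : ℕ) :
    cosMoment (n + 1) (ν + 1) = (cosMoment n ν + cosMoment n (ν + 2)) / 2 := by
  have product_to_sum (θ : ℝ) : cos θ ^ (n + 1) * cos ((ν + 1 : ℕ) * θ) =
      (cos θ ^ n * cos (ν * θ) + cos θ ^ n * cos ((ν + 2 : ℕ) * θ)) / 2 := by
    have h₁ : ((ν + 2 : ℕ) : ℝ) * θ = (ν + 1 : ℕ) * θ + θ := by push_cast; ring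
    have h₂ : (ν : ℝ) * θ = (ν + 1 : ℕ) * θ - θ := by push_cast; ring
    rw [h₁, h₂, cos_add, cos_sub]
    ring
  simp only [cosMoment, product_to_sum, intervalIntegral.integral_div,
    intervalIntegral.integral_add (intervalIntegrable_cos_pow_mul_cos n ν)
      (intervalIntegrable_cos_pow_mul_cos n (ν + 2))]

theorem cosMoment_eq_zero {n ν : ℕ} (h : n < ν ∨ Odd (n + ν)) : cosMoment n ν = 0 := by
  induction n generalizing ν with
  | zero =>
    obtain ⟨μ, rfl⟩ : ∃ μ, ν = μ + 1 := Nat.exists_eq_add_one.2 (by grind)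
    exact cosMoment_zero_succ μ
  | succ n ih =>
    cases ν with
    | zero => rw [cosMoment_succ_zero]; exact ih (by grind)
    | succ μ => rw [cosMoment_succ_succ, ih (by grind), ih (by grind)]; norm_num

theorem cosMoment_of_add_two_mul_eq {n ν k : ℕ} (h : ν + 2 * k = n) :
    cosMoment n ν = π * n.choose k / 2 ^ n := by
  induction n generalizing ν k with
  | zero =>
    obtain ⟨rfl, rfl⟩ : ν = 0 ∧ k = 0 := by omega
    simp [cosMoment_zero_zero]
  | succ n ih =>
    cases ν with
    | zero =>
      obtain ⟨m, rfl⟩ : ∃ m, k = m + 1 := Nat.exists_eq_add_one.2 (by omega)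
      obtain rfl : n = 2 * m + 1 := by omega
      rw [cosMoment_succ_zero, ih (k := m) (by omega), Nat.choose_succ_succ', Nat.choose_symm_half]
      push_cast
      ring
    | succ μ =>
      rw [cosMoment_succ_succ]
      cases k with
      | zero =>
        obtain rfl : n = μ := by omega
        rw [ih (k := 0) (by omega), cosMoment_eq_zero (by omega)]
        simp only [Nat.choose_zero_right]
        ring
      | succ m =>
        rw [ih (k := m + 1) (by omega), ih (k := m) (by omega), Nat.choose_succ_succ' n m]
        push_cast
        ring

theorem hasSum_besselI_cosMoment (ν : ℕ) (w : ℝ) :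
    HasSum (fun n ↦ w ^ n / n ! * cosMoment n ν / π) (besselI ν w) := by
  have hexp (θ : ℝ) : HasSum (fun n ↦ (w * cos θ) ^ n / n ! * cos (ν * θ))
      (exp (w * cos θ) * cos (ν * θ)) :=
    (exp_eq_exp_ℝ ▸ NormedSpace.expSeries_div_hasSum_exp (w * cos θ)).mul_right _
  have hbound (n : ℕ) (θ : ℝ) : ‖(w * cos θ) ^ n / n ! * cos (ν * θ)‖ ≤ |w| ^ n / n ! := by
    simp only [norm_mul, norm_div, norm_pow, Real.norm_eq_abs, Nat.abs_cast]
    refine (mul_le_of_le_one_right (by positivity) (abs_cos_le_one _)).trans ?_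
    gcongr
    exact mul_le_of_le_one_right (abs_nonneg w) (abs_cos_le_one θ)
  have hint := intervalIntegral.hasSum_integral_of_dominated_convergence
    (μ := volume) (a := 0) (b := π) (fun n _ ↦ |w| ^ n / n !)
    (fun n ↦ (by fun_prop : Continuous _).aestronglyMeasurable)
    (fun n ↦ .of_forall fun θ _ ↦ hbound n θ)
    (.of_forall fun _ _ ↦ summable_pow_div_factorial |w|) intervalIntegrable_const
    (.of_forall fun θ _ ↦ hexp θ)
  have hterm : (fun n ↦ w ^ n / n ! * cosMoment n ν / π) =
      fun n ↦ 1 / π * ∫ θ in 0..π, (w * cos θ) ^ n / n ! * cos (ν * θ) := by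
    ext n
    simp only [cosMoment, ← intervalIntegral.integral_const_mul, ← intervalIntegral.integral_div]
    congr 1 with θ
    ring
  rw [besselI, hterm]
  exact hint.mul_left _

noncomputable def besselTerm (ν : ℕ) (u : ℝ) (k : ℕ) : ℝ :=
  u ^ (ν + 2 * k) / (k ! * (k + ν)!)

theorem hasSum_besselTerm (ν : ℕ) (w : ℝ) : HasSum (besselTerm ν (w / 2)) (besselI ν w) := by
  have hinj : Function.Injective fun k ↦ ν + 2 * k := fun a b h ↦ by simp only at h; omega
  have hsupp (n : ℕ) (hn : n ∉ Set.range fun k ↦ ν + 2 * k) :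
      w ^ n / n ! * cosMoment n ν / π = 0 := by
    rw [cosMoment_eq_zero, mul_zero, zero_div]
    by_contra! h
    exact hn ⟨(n - ν) / 2, by grind⟩
  convert (hinj.hasSum_iff hsupp).2 (hasSum_besselI_cosMoment ν w) using 1
  ext k
  simp only [Function.comp_apply, besselTerm, cosMoment_of_add_two_mul_eq rfl,
    Nat.cast_choose ℝ (by omega : k ≤ ν + 2 * k), show ν + 2 * k - k = k + ν by omega, div_pow]
  field_simp

theorem two_mul_mul_besselTerm (ν : ℕ) (u : ℝ) (k : ℕ) :
    2 * u * besselTerm ν u k = 2 * (k + ν + 1) * besselTerm (ν + 1) u k := by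
  simp only [besselTerm, ← add_assoc, Nat.factorial_succ]
  push_cast
  field_simp
  ring

theorem besselTerm_succ (ν : ℕ) (u : ℝ) (k : ℕ) :
    besselTerm ν u (k + 1) = u ^ 2 / ((k + 1) * (k + ν + 1)) * besselTerm ν u k := by
  simp only [besselTerm, Nat.factorial_succ, show k + 1 + ν = k + ν + 1 by omega]
  push_cast
  field_simp
  ring

theorem four_mul_mul_besselTerm_le (ν : ℕ) {u : ℝ} (hu : 0 ≤ u) (k : ℕ) :
    4 * u * besselTerm (ν + 1) u k ≤
      (2 * k + ν + 2) * besselTerm (ν + 1) u k +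
        (2 * k + ν + 4) * besselTerm (ν + 1) u (k + 1) := by
  have hP : (0 : ℝ) < (k + 1) * (k + ν + 2) := by positivity
  have hP₀ := hP.ne'
  have hst : 4 * ((k + 1) * (k + ν + 2)) ≤ ((2 * k + ν + 2) * (2 * k + ν + 4) : ℝ) := by
    nlinarith [(Nat.cast_nonneg ν : (0 : ℝ) ≤ ν)]
  -- AM-GM: for `s = 2k+ν+2`, `t = 2k+ν+4`, `P = (k+1)(k+ν+2)` one has
  -- `s (sP + tu² - 4uP) = P (s - 2u)² + (st - 4P) u²`.
  have amgm : 4 * u * ((k + 1) * (k + ν + 2)) ≤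
      (2 * k + ν + 2) * ((k + 1) * (k + ν + 2)) + (2 * k + ν + 4) * u ^ 2 := by
    nlinarith [mul_nonneg hP.le (sq_nonneg (2 * k + ν + 2 - 2 * u)),
      mul_le_mul_of_nonneg_right hst (sq_nonneg u)]
  have hb : 0 ≤ besselTerm (ν + 1) u k / ((k + 1) * (k + ν + 2)) := by unfold besselTerm; positivity
  calc 4 * u * besselTerm (ν + 1) u k
      = besselTerm (ν + 1) u k / ((k + 1) * (k + ν + 2)) * (4 * u * ((k + 1) * (k + ν + 2))) := by
        field_simp
    _ ≤ besselTerm (ν + 1) u k / ((k + 1) * (k + ν + 2)) *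
        ((2 * k + ν + 2) * ((k + 1) * (k + ν + 2)) + (2 * k + ν + 4) * u ^ 2) := by gcongr
    _ = _ := by
        rw [besselTerm_succ]
        push_cast
        field_simp
        ring

theorem HasSum.lt_of_two_mul_le_add_succ {f c : ℕ → ℝ} {a b : ℝ} (hf : HasSum f a)
    (hc : HasSum c b) (h : ∀ k, 2 * f k ≤ c k + c (k + 1)) (hc₀ : 0 < c 0) : a < b := by
  have hc_succ : HasSum (fun k ↦ c (k + 1)) (b - c 0) := by
    simpa using (hasSum_nat_add_iff' 1).2 hc
  linarith [hasSum_le h (hf.mul_left 2) (hc.add hc_succ)]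

/-- For `w > 0` and `ν ≥ 0`, `I_{ν+1}(w) < I_ν(w)/(1 + ν/w)`. -/
theorem besselI_ratio_bound (ν : ℕ) (w : ℝ) (hw : 0 < w) :
    besselI (ν + 1) w < besselI ν w / (1 + (ν : ℝ) / w) := by
  have hI := hasSum_besselTerm (ν + 1) w
  have hc : HasSum (fun k ↦ (2 * k + ν + 2) * besselTerm (ν + 1) (w / 2) k)
      (w * besselI ν w - ν * besselI (ν + 1) w) := by
    have : (fun k : ℕ ↦ (2 * k + ν + 2) * besselTerm (ν + 1) (w / 2) k) =
        fun k ↦ w * besselTerm ν (w / 2) k - ν * besselTerm (ν + 1) (w / 2) k := by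
      ext k
      linarith [two_mul_mul_besselTerm ν (w / 2) k]
    rw [this]
    exact ((hasSum_besselTerm ν w).mul_left w).sub (hI.mul_left (ν : ℝ))
  have hlt := (hI.mul_left w).lt_of_two_mul_le_add_succ hc
    (fun k ↦ by push_cast; linarith [four_mul_mul_besselTerm_le ν (by positivity : 0 ≤ w / 2) k])
    (by unfold besselTerm; positivity)
  rw [lt_div_iff₀ (by positivity)]
  field_simp
  linarith
end

section
/- Let c > 0, t > 0 and let k be an integer with k ≥ max(5ct, 2). Then e^{−ct} Σ_{ν=k}^{∞} (ν−k+2)(ν−k+1) I_ν(ct) ≤ 4 (ct)^k/(2k−1)!!. -/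
open Real intervalIntegral Nat

noncomputable def cosPowFourierCoeff (n ν : ℕ) : ℝ :=
  ∫ θ in (0:ℝ)..π, cos θ ^ n * cos (ν * θ)

lemma cos_natCast_mul_add_cos (m : ℕ) (θ : ℝ) :
    cos (m * θ) + cos ((m + 2 : ℕ) * θ) = 2 * cos θ * cos ((m + 1 : ℕ) * θ) := by
  have h₁ : (m : ℝ) * θ = (m + 1 : ℕ) * θ - θ := by push_cast; ring
  have h₂ : ((m + 2 : ℕ) : ℝ) * θ = (m + 1 : ℕ) * θ + θ := by push_cast; ring
  rw [h₁, h₂, cos_sub, cos_add]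
  ring

lemma cos_natCast_mul_sub_cos (m : ℕ) (θ : ℝ) :
    cos (m * θ) - cos ((m + 2 : ℕ) * θ) = 2 * sin θ * sin ((m + 1 : ℕ) * θ) := by
  have h₁ : (m : ℝ) * θ = (m + 1 : ℕ) * θ - θ := by push_cast; ring
  have h₂ : ((m + 2 : ℕ) : ℝ) * θ = (m + 1 : ℕ) * θ + θ := by push_cast; ring
  rw [h₁, h₂, cos_sub, cos_add]
  ring

lemma cosPowFourierCoeff_zero_nonneg (ν : ℕ) : 0 ≤ cosPowFourierCoeff 0 ν := by
  rcases eq_or_ne ν 0 with rfl | hν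
  · simp [cosPowFourierCoeff, pi_pos.le]
  · have : cosPowFourierCoeff 0 ν = 0 := by
      simp [cosPowFourierCoeff, integral_comp_mul_left cos (Nat.cast_ne_zero.mpr hν),
        sin_nat_mul_pi]
    exact this.ge

lemma cosPowFourierCoeff_succ_zero (n : ℕ) :
    cosPowFourierCoeff (n + 1) 0 = cosPowFourierCoeff n 1 := by
  simp [cosPowFourierCoeff, pow_succ]

lemma cosPowFourierCoeff_succ_succ (n m : ℕ) :
    cosPowFourierCoeff (n + 1) (m + 1) =
      (cosPowFourierCoeff n m + cosPowFourierCoeff n (m + 2)) / 2 := by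
  have hcont (ν : ℕ) :
      IntervalIntegrable (fun θ => cos θ ^ n * cos (ν * θ)) MeasureTheory.volume 0 π :=
    (by fun_prop : Continuous _).intervalIntegrable _ _
  unfold cosPowFourierCoeff
  rw [← integral_add (hcont m) (hcont (m + 2)), ← integral_div]
  congr 1 with θ
  rw [← mul_add, cos_natCast_mul_add_cos, pow_succ]
  ring

lemma cosPowFourierCoeff_nonneg (n ν : ℕ) : 0 ≤ cosPowFourierCoeff n ν := by
  induction n generalizing ν with
  | zero => exact cosPowFourierCoeff_zero_nonneg ν
  | succ n ih =>
    cases ν with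
    | zero => simpa [cosPowFourierCoeff_succ_zero] using ih 1
    | succ m =>
      rw [cosPowFourierCoeff_succ_succ]
      have := ih m
      have := ih (m + 2)
      positivity

lemma hasSum_besselI (ν : ℕ) (w : ℝ) :
    HasSum (fun n => 1 / π * (w ^ n / n ! * cosPowFourierCoeff n ν)) (besselI ν w) := by
  refine HasSum.mul_left _ ?_
  have hterm (n : ℕ) : w ^ n / n ! * cosPowFourierCoeff n ν =
      ∫ θ in (0:ℝ)..π, (w * cos θ) ^ n / n ! * cos (ν * θ) := by
    rw [cosPowFourierCoeff, ← integral_const_mul]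
    congr 1 with θ
    ring
  simp only [hterm]
  refine hasSum_integral_of_dominated_convergence (fun n _ => |w| ^ n / n !)
    (fun n => (by fun_prop : Continuous _).aestronglyMeasurable) ?_ ?_
    intervalIntegrable_const ?_
  · refine fun n => Filter.Eventually.of_forall fun θ _ => ?_
    rw [norm_mul, norm_div, norm_pow, norm_mul, Real.norm_natCast, Real.norm_eq_abs,
      Real.norm_eq_abs, Real.norm_eq_abs]
    have h1 := abs_cos_le_one θ
    have h2 := abs_cos_le_one (ν * θ)
    calc (|w| * |cos θ|) ^ n / n ! * |cos (ν * θ)| ≤ (|w| * 1) ^ n / n ! * 1 := by gcongr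
      _ = |w| ^ n / n ! := by ring
  · exact Filter.Eventually.of_forall fun _ _ => Real.summable_pow_div_factorial |w|
  · refine Filter.Eventually.of_forall fun θ _ => ?_
    exact (Real.exp_eq_exp_ℝ ▸ NormedSpace.expSeries_div_hasSum_exp (w * cos θ)).mul_right _

lemma besselI_nonneg (ν : ℕ) {w : ℝ} (hw : 0 ≤ w) : 0 ≤ besselI ν w :=
  (hasSum_besselI ν w).nonneg fun n => by
    have := cosPowFourierCoeff_nonneg n ν
    have := pi_pos
    positivity

lemma besselI_recurrence (μ : ℕ) (w : ℝ) :
    (μ + 1) * besselI (μ + 1) w = w / 2 * (besselI μ w - besselI (μ + 2) w) := by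
  set g : ℕ → ℝ → ℝ := fun ν θ => exp (w * cos θ) * cos (ν * θ) with hg_def
  have hg (ν : ℕ) : IntervalIntegrable (g ν) MeasureTheory.volume 0 π :=
    (by fun_prop : Continuous _).intervalIntegrable _ _
  have hderiv (θ : ℝ) : HasDerivAt (fun θ => exp (w * cos θ) * sin ((μ + 1 : ℕ) * θ))
      ((μ + 1) * g (μ + 1) θ - w / 2 * g μ θ + w / 2 * g (μ + 2) θ) θ := by
    refine ((((hasDerivAt_cos θ).const_mul w).exp).fun_mul
      (((hasDerivAt_id' θ).const_mul ((μ + 1 : ℕ) : ℝ)).sin)).congr_deriv ?_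
    have := cos_natCast_mul_sub_cos μ θ
    simp only [hg_def]
    push_cast at this ⊢
    linear_combination (w / 2 * exp (w * cos θ)) * this
  have h := integral_eq_sub_of_hasDerivAt (fun θ _ => hderiv θ)
    ((((hg _).const_mul _).sub ((hg _).const_mul _)).add ((hg _).const_mul _))
  rw [integral_add (((hg _).const_mul _).sub ((hg _).const_mul _)) ((hg _).const_mul _),
    integral_sub ((hg _).const_mul _) ((hg _).const_mul _), integral_const_mul,
    integral_const_mul, integral_const_mul] at h
  have hsin : sin (((μ + 1 : ℕ) : ℝ) * π) = 0 := sin_nat_mul_pi _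
  simp only [hsin, mul_zero, sin_zero, sub_zero] at h
  simp only [besselI, hg_def] at h ⊢
  push_cast at h ⊢
  linear_combination (1 / π) * h

lemma besselI_succ_le {w : ℝ} (hw : 0 ≤ w) (μ : ℕ) :
    besselI (μ + 1) w ≤ w / (2 * (μ + 1)) * besselI μ w := by
  have hrec := besselI_recurrence μ w
  have hnonneg := besselI_nonneg (μ + 2) hw
  rw [div_mul_eq_mul_div, le_div_iff₀ (by positivity)]
  nlinarith

lemma besselI_zero_le_exp {w : ℝ} (hw : 0 ≤ w) : besselI 0 w ≤ exp w := by
  have hint : ∫ θ in (0:ℝ)..π, exp (w * cos θ) ≤ ∫ _ in (0:ℝ)..π, exp w :=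
    integral_mono_on pi_pos.le ((by fun_prop : Continuous _).intervalIntegrable _ _)
      intervalIntegrable_const fun θ _ =>
        exp_le_exp.mpr (mul_le_of_le_one_right hw (cos_le_one θ))
  simp only [besselI, Nat.cast_zero, zero_mul, cos_zero, mul_one]
  rw [integral_const, smul_eq_mul, sub_zero] at hint
  rw [div_mul_eq_mul_div, one_mul, div_le_iff₀ pi_pos]
  linarith

lemma besselI_le_pow_div_factorial_mul_exp {w : ℝ} (hw : 0 ≤ w) (μ : ℕ) :
    besselI μ w ≤ (w / 2) ^ μ / μ ! * exp w := by
  induction μ with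
  | zero => simpa using besselI_zero_le_exp hw
  | succ μ ih =>
    calc besselI (μ + 1) w ≤ w / (2 * (μ + 1)) * besselI μ w := besselI_succ_le hw μ
      _ ≤ w / (2 * (μ + 1)) * ((w / 2) ^ μ / μ ! * exp w) := by gcongr
      _ = (w / 2) ^ (μ + 1) / (μ + 1)! * exp w := by
        rw [factorial_succ]
        push_cast
        field_simp
        ring

lemma besselI_add_le_pow_mul {w : ℝ} (hw : 0 ≤ w) (k i : ℕ) :
    besselI (k + i) w ≤ (w / (2 * (k + 1))) ^ i * besselI k w := by
  induction i with
  | zero => simp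
  | succ i ih =>
    have hratio : w / (2 * ((k + i : ℕ) + 1)) ≤ w / (2 * (k + 1)) := by
      gcongr
      exact_mod_cast le_add_right k i
    calc besselI (k + i + 1) w ≤ w / (2 * ((k + i : ℕ) + 1)) * besselI (k + i) w :=
          besselI_succ_le hw (k + i)
      _ ≤ w / (2 * (k + 1)) * ((w / (2 * (k + 1))) ^ i * besselI k w) := by
        gcongr
        exact besselI_nonneg _ hw
      _ = (w / (2 * (k + 1))) ^ (i + 1) * besselI k w := by ring

lemma doubleFactorial_le_doubleFactorial_succ : ∀ n : ℕ, n‼ ≤ (n + 1)‼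
  | 0 => le_rfl
  | 1 => by decide
  | n + 2 => by
    rw [doubleFactorial_add_two, doubleFactorial_add_two]
    exact Nat.mul_le_mul (le_succ _) (doubleFactorial_le_doubleFactorial_succ n)

lemma doubleFactorial_two_mul_sub_one_le (k : ℕ) : (2 * k - 1)‼ ≤ 2 ^ k * k ! :=
  doubleFactorial_two_mul k ▸
    (monotone_nat_of_le_succ doubleFactorial_le_doubleFactorial_succ) (sub_le _ _)

lemma exp_neg_mul_besselI_le {w : ℝ} (hw : 0 ≤ w) (k : ℕ) :
    exp (-w) * besselI k w ≤ w ^ k / (2 * k - 1)‼ := by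
  calc exp (-w) * besselI k w ≤ exp (-w) * ((w / 2) ^ k / k ! * exp w) := by
        gcongr
        exact besselI_le_pow_div_factorial_mul_exp hw k
    _ = w ^ k / (2 ^ k * k !) * exp (-w + w) := by rw [exp_add, div_pow]; ring
    _ ≤ w ^ k / (2 * k - 1)‼ := by
        rw [neg_add_cancel, exp_zero, mul_one]
        gcongr
        exact_mod_cast doubleFactorial_two_mul_sub_one_le k

lemma hasSum_add_two_mul_add_one_mul_geometric {r : ℝ} (hr : |r| < 1) :
    HasSum (fun i : ℕ => ((i : ℝ) + 2) * (i + 1) * r ^ i) (2 / (1 - r) ^ 3) := by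
  have h := (hasSum_choose_mul_geometric_of_norm_lt_one 2 (r := r)
    (by rwa [Real.norm_eq_abs])).mul_left 2
  rw [show 2 * (1 / (1 - r) ^ (2 + 1)) = 2 / (1 - r) ^ 3 by ring] at h
  refine h.congr_fun fun i => ?_
  rw [cast_choose_two]
  push_cast
  ring

lemma tsum_mul_besselI_add_le {w : ℝ} (hw : 0 ≤ w) {k : ℕ} (hk : w < 2 * (k + 1)) :
    ∑' i : ℕ, ((i : ℝ) + 2) * (i + 1) * besselI (k + i) w ≤
      2 / (1 - w / (2 * (k + 1))) ^ 3 * besselI k w := by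
  set r := w / (2 * (k + 1))
  have hr : |r| < 1 := by
    rw [abs_of_nonneg (by positivity), div_lt_one (by positivity)]
    exact hk
  have hg := (hasSum_add_two_mul_add_one_mul_geometric hr).mul_right (besselI k w)
  have hle (i : ℕ) : ((i : ℝ) + 2) * (i + 1) * besselI (k + i) w ≤
      ((i : ℝ) + 2) * (i + 1) * r ^ i * besselI k w := by
    rw [mul_assoc _ (r ^ i)]
    gcongr
    exact besselI_add_le_pow_mul hw k i
  have hf := hg.summable.of_nonneg_of_le
    (fun i => by have := besselI_nonneg (k + i) hw; positivity) hle
  exact hasSum_le hle hf.hasSum hg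

theorem besselI_tail_bound_general (c t : ℝ) (hc : 0 < c) (ht : 0 < t)
    (k : ℕ) (hk5 : 5 * (c * t) ≤ (k : ℝ)) :
    Real.exp (-(c * t)) *
        ∑' i : ℕ, ((i : ℝ) + 2) * ((i : ℝ) + 1) * besselI (k + i) (c * t) ≤
      4 * (c * t) ^ k / ((2 * k - 1).doubleFactorial : ℝ) := by
  set w := c * t
  have hw : 0 ≤ w := (mul_pos hc ht).le
  have hr : w / (2 * (k + 1)) ≤ 1 / 10 := by
    rw [div_le_iff₀ (by positivity)]
    linarith
  have hconst : 2 / (1 - w / (2 * (k + 1))) ^ 3 ≤ 4 := by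
    have : (9 / 10 : ℝ) ^ 3 ≤ (1 - w / (2 * (k + 1))) ^ 3 := by gcongr; linarith
    rw [div_le_iff₀ (by positivity)]
    linarith
  calc exp (-w) * ∑' i : ℕ, ((i : ℝ) + 2) * (i + 1) * besselI (k + i) w
      ≤ exp (-w) * (2 / (1 - w / (2 * (k + 1))) ^ 3 * besselI k w) := by
        gcongr
        exact tsum_mul_besselI_add_le hw (by linarith)
    _ = 2 / (1 - w / (2 * (k + 1))) ^ 3 * (exp (-w) * besselI k w) := by ring
    _ ≤ 4 * (w ^ k / (2 * k - 1)‼) :=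
        mul_le_mul hconst (exp_neg_mul_besselI_le hw k)
          (mul_nonneg (exp_pos _).le (besselI_nonneg k hw)) zero_le_four
    _ = 4 * w ^ k / (2 * k - 1)‼ := by ring

/-- If `k ≥ max(5ct, 2)` then
`e^{−ct} Σ_{ν=k}^∞ (ν−k+2)(ν−k+1) I_ν(ct) ≤ 4(ct)^k/(2k−1)!!`. -/
theorem besselI_tail_bound (c t : ℝ) (hc : 0 < c) (ht : 0 < t)
    (k : ℕ) (hk2 : 2 ≤ k) (hk5 : 5 * (c * t) ≤ (k : ℝ)) :
    Real.exp (-(c * t)) *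
        ∑' i : ℕ, ((i : ℝ) + 2) * ((i : ℝ) + 1) * besselI (k + i) (c * t) ≤
      4 * (c * t) ^ k / ((2 * k - 1).doubleFactorial : ℝ) :=
  besselI_tail_bound_general c t hc ht k hk5
end
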